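/- arXiv:2503.04480 — 2 statements merged into one kernel-verified Lean document; each statement's English description precedes it below -/
import Mathlib

section
/- (Proposition 2) Convergence of projected stochastic gradient descent for a strongly convex objective: let W ⊆ ℝⁿ be nonempty, closed, bounded and convex, let F : ℝⁿ → ℝ be differentiable on an open set containing W and c-strongly convex on W for some c > 0, and let w̃ be the (unique) minimizer of F over W. On a probability space with filtration (𝓕_t)_{t≥0}, let w⁰ ∈ W be deterministic and define recursively w^{t+1} = Π_W(w^t − γ_t ĝ_t), where Π_W is the metric (L²) projection onto W, γ_t = 1/(c(t+1)), w^t is 𝓕_t-measurable, and ĝ_t is a square-integrable random vector satisfying E[ĝ_t | 𝓕_t] = ∇F(w^t) almost surely and E[‖ĝ_t‖²] ≤ M² for all t, for some constant M. Then for every t ≥ 1, E[‖w^t − w̃‖²] ≤ max{ M²/c², ‖w⁰ − w̃‖² } / t. -/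
open MeasureTheory
open scoped ENNReal RealInnerProductSpace BigOperators

section Aux

variable {E : Type*} [NormedAddCommGroup E] [InnerProductSpace ℝ E]

/-- The metric projection onto a convex set is a contraction toward points of the set. -/
lemma proj_contract {W : Set E} (hW : Convex ℝ W)
    (proj : E → E) (hproj : ∀ x, proj x ∈ W ∧ ∀ y ∈ W, ‖proj x - x‖ ≤ ‖y - x‖)
    (x : E) {y : E} (hy : y ∈ W) : ‖proj x - y‖ ≤ ‖x - y‖ := by
  set p := proj x with hp
  have hpW : p ∈ W := (hproj x).1
  haveI : Nonempty W := ⟨⟨p, hpW⟩⟩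
  have hinf : ‖x - p‖ = ⨅ w : W, ‖x - w‖ := by
    refine le_antisymm (le_ciInf fun z => ?_) (ciInf_le (f := fun w : W => ‖x - w‖) ⟨(0:ℝ), by rintro _ ⟨z, rfl⟩; exact norm_nonneg _⟩ ⟨p, hpW⟩)
    rw [norm_sub_rev, norm_sub_rev x z]
    exact (hproj x).2 z z.2
  have hVI := (norm_eq_iInf_iff_real_inner_le_zero hW hpW).mp hinf
  have h1 : ⟪x - p, y - p⟫ ≤ 0 := hVI y hy
  have h2 : ‖x - y‖ ^ 2 = ‖x - p‖ ^ 2 + 2 * ⟪x - p, p - y⟫ + ‖p - y‖ ^ 2 := by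
    have : x - y = (x - p) + (p - y) := by abel
    rw [this, norm_add_sq_real]
  have h3 : ⟪x - p, p - y⟫ = -⟪x - p, y - p⟫ := by
    rw [← inner_neg_right]; congr 1; abel
  have h4 : ‖p - y‖ ^ 2 ≤ ‖x - y‖ ^ 2 := by nlinarith [sq_nonneg ‖x - p‖]
  exact le_of_pow_le_pow_left₀ two_ne_zero (norm_nonneg _) h4

/-- Strong convexity + minimality give the key inner-product bound. -/
lemma strong_min_inner {W : Set E} (hWconv : Convex ℝ W) {F : E → ℝ} {G : E → E}
    {c : ℝ} (hc : 0 < c)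
    (hstrong : ∀ x ∈ W, ∀ y ∈ W, F x + ⟪G x, y - x⟫ + c / 2 * ‖y - x‖ ^ 2 ≤ F y)
    {wopt : E} (hwoptW : wopt ∈ W) (hmin : ∀ y ∈ W, F wopt ≤ F y)
    {x : E} (hx : x ∈ W) : c * ‖x - wopt‖ ^ 2 ≤ ⟪G x, x - wopt⟫ := by
  set d2 : ℝ := ‖x - wopt‖ ^ 2 with hd2
  have hd2nonneg : 0 ≤ d2 := sq_nonneg _
  -- Quadratic growth: F wopt + c/2 * d2 ≤ F x
  have hgrow : ∀ s : ℝ, 0 < s → s < 1 → F wopt + c / 2 * (1 - s) * d2 ≤ F x := by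
    intro s hs0 hs1
    set z : E := wopt + s • (x - wopt) with hz
    have hzW : z ∈ W := by
      have := hWconv hwoptW hx (by linarith : (0:ℝ) ≤ 1 - s) (le_of_lt hs0) (by ring)
      convert this using 1
      rw [hz]; module
    have hxz : x - z = (1 - s) • (x - wopt) := by rw [hz]; module
    have hwz : wopt - z = (-s) • (x - wopt) := by rw [hz]; module
    have h1 := hstrong z hzW x hx
    have h2 := hstrong z hzW wopt hwoptW
    have h3 := hmin z hzW
    rw [hxz] at h1
    rw [hwz] at h2
    rw [real_inner_smul_right] at h1 h2
    have hn1 : ‖(1 - s) • (x - wopt)‖ ^ 2 = (1 - s) ^ 2 * d2 := by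
      rw [norm_smul, mul_pow, Real.norm_eq_abs, sq_abs]
    have hn2 : ‖(-s) • (x - wopt)‖ ^ 2 = s ^ 2 * d2 := by
      rw [norm_smul, mul_pow, Real.norm_eq_abs, sq_abs]; ring_nf; rw [hd2]
    rw [hn1] at h1; rw [hn2] at h2
    nlinarith [mul_le_mul_of_nonneg_left h1 (le_of_lt hs0),
      mul_le_mul_of_nonneg_left h2 (by linarith : (0:ℝ) ≤ 1 - s)]
  have hgrow0 : F wopt + c / 2 * d2 ≤ F x := by
    by_contra hcon
    push_neg at hcon
    have hδpos : 0 < F wopt + c / 2 * d2 - F x := by linarith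
    have hd2pos : 0 < d2 := by
      rcases lt_or_eq_of_le hd2nonneg with h | h
      · exact h
      · exfalso; have := hmin x hx; nlinarith
    have hcd2 : 0 < c * d2 := mul_pos hc hd2pos
    obtain ⟨s, hs0, hs1, hkey⟩ : ∃ s : ℝ, 0 < s ∧ s < 1 ∧
        c / 2 * s * d2 < F wopt + c / 2 * d2 - F x := by
      refine ⟨min (1/2 : ℝ) ((F wopt + c / 2 * d2 - F x) / (c * d2)),
        lt_min (by norm_num) (div_pos hδpos hcd2),
        lt_of_le_of_lt (min_le_left _ _) (by norm_num), ?_⟩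
      have hsle : min (1/2 : ℝ) ((F wopt + c / 2 * d2 - F x) / (c * d2))
          ≤ (F wopt + c / 2 * d2 - F x) / (c * d2) := min_le_right _ _
      have hmul := mul_le_mul_of_nonneg_left hsle (le_of_lt hcd2)
      rw [mul_div_cancel₀ _ (ne_of_gt hcd2)] at hmul
      nlinarith
    have h := hgrow s hs0 hs1
    nlinarith
  have h := hstrong x hx wopt hwoptW
  have hsw : ⟪G x, wopt - x⟫ = -⟪G x, x - wopt⟫ := by
    rw [← inner_neg_right]; congr 1; abel
  rw [hsw] at h
  have hnw : ‖wopt - x‖ ^ 2 = d2 := by rw [hd2, ← norm_neg]; congr 1; abel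
  rw [hnw] at h
  linarith

/-- Conditional expectation commutes with continuous linear maps. -/
lemma condexp_comp_clm {α : Type*} {m m0 : MeasurableSpace α} {μ : Measure α}
    (hm : m ≤ m0) [SigmaFinite (μ.trim hm)]
    {E F : Type*} [NormedAddCommGroup E] [NormedSpace ℝ E] [CompleteSpace E]
    [NormedAddCommGroup F] [NormedSpace ℝ F] [CompleteSpace F]
    (L : E →L[ℝ] F) {f : α → E} (hf : Integrable f μ) :
    μ[fun ω => L (f ω)|m] =ᵐ[μ] fun ω => L ((μ[f|m]) ω) := by
  refine (ae_eq_condExp_of_forall_setIntegral_eq hm (L.integrable_comp hf)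
    (fun s _ _ => (L.integrable_comp integrable_condExp).integrableOn)
    (fun s hs hμs => ?_)
    ((L.continuous.comp_stronglyMeasurable stronglyMeasurable_condExp).aestronglyMeasurable)).symm
  rw [L.integral_comp_comm integrable_condExp.integrableOn,
    L.integral_comp_comm hf.integrableOn, setIntegral_condExp hm hf hs]

end Aux


lemma coord_abs_le_norm {n : ℕ} (x : EuclideanSpace ℝ (Fin n)) (i : Fin n) : |x i| ≤ ‖x‖ := by
  have h := PiLp.norm_sq_eq_of_L2 (fun _ : Fin n => ℝ) x
  have h2 : ‖x i‖ ^ 2 ≤ ‖x‖ ^ 2 := by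
    rw [h]
    exact Finset.single_le_sum (f := fun j => ‖x j‖ ^ 2) (fun j _ => sq_nonneg _)
      (Finset.mem_univ i)
  simpa using le_of_pow_le_pow_left₀ two_ne_zero (norm_nonneg x) h2


/-- Proposition 2: convergence of projected stochastic gradient
descent for a `c`-strongly convex objective `F` over a nonempty closed bounded
convex set `W`, with projection `proj` (the metric/L² projection onto `W`),
step sizes `γ t = 1/(c(t+1))`, adapted iterates, conditionally unbiased
square-integrable gradient estimates with second moment bounded by `M²`:
for all `t ≥ 1`, `E‖w^t − w̃‖² ≤ max{M²/c², ‖w⁰ − w̃‖²} / t`. -/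
theorem projected_sgd_convergence {n : ℕ}
    (W : Set (EuclideanSpace ℝ (Fin n)))
    (hWne : W.Nonempty) (hWclosed : IsClosed W)
    (hWbdd : Bornology.IsBounded W) (hWconv : Convex ℝ W)
    (F : EuclideanSpace ℝ (Fin n) → ℝ)
    (V : Set (EuclideanSpace ℝ (Fin n))) (hVopen : IsOpen V) (hWV : W ⊆ V)
    (hFdiff : DifferentiableOn ℝ F V)
    (c : ℝ) (hc : 0 < c)
    (hstrong : ∀ x ∈ W, ∀ y ∈ W,
      F x + ⟪gradient F x, y - x⟫ + c / 2 * ‖y - x‖ ^ 2 ≤ F y)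
    (wopt : EuclideanSpace ℝ (Fin n)) (hwoptW : wopt ∈ W)
    (hwoptmin : ∀ y ∈ W, F wopt ≤ F y)
    (Ω : Type*) [m0 : MeasurableSpace Ω] (μ : Measure Ω) [IsProbabilityMeasure μ]
    (ℱ : Filtration ℕ m0)
    (proj : EuclideanSpace ℝ (Fin n) → EuclideanSpace ℝ (Fin n))
    (hproj : ∀ x, proj x ∈ W ∧ ∀ y ∈ W, ‖proj x - x‖ ≤ ‖y - x‖)
    (w : ℕ → Ω → EuclideanSpace ℝ (Fin n))
    (g : ℕ → Ω → EuclideanSpace ℝ (Fin n))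
    (w0 : EuclideanSpace ℝ (Fin n)) (hw0W : w0 ∈ W) (hw0 : w 0 = fun _ => w0)
    (γ : ℕ → ℝ) (hγ : ∀ t, γ t = 1 / (c * (t + 1)))
    (hrec : ∀ t ω, w (t + 1) ω = proj (w t ω - γ t • g t ω))
    (hadapted : ∀ t, Measurable[ℱ t] (w t))
    (hg2 : ∀ t, MemLp (g t) 2 μ)
    (hunbiased : ∀ t, μ[g t | ℱ t] =ᵐ[μ] fun ω => gradient F (w t ω))
    (M : ℝ) (hM : ∀ t, ∫ ω, ‖g t ω‖ ^ 2 ∂μ ≤ M ^ 2) :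
    ∀ t : ℕ, 1 ≤ t →
      ∫ ω, ‖w t ω - wopt‖ ^ 2 ∂μ
        ≤ max (M ^ 2 / c ^ 2) (‖w0 - wopt‖ ^ 2) / t := by
  have hm : ∀ s : ℕ, ℱ s ≤ m0 := ℱ.le
  have hWmem : ∀ s ω, w s ω ∈ W := by
    intro s
    induction s with
    | zero => intro ω; rw [hw0]; exact hw0W
    | succ s ih => intro ω; rw [hrec]; exact (hproj _).1
  obtain ⟨R, hRsub⟩ := hWbdd.subset_closedBall wopt
  have hXbdd : ∀ s ω, ‖w s ω - wopt‖ ≤ R := by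
    intro s ω
    have := hRsub (hWmem s ω)
    rwa [Metric.mem_closedBall, dist_eq_norm] at this
  have hwm : ∀ s, Measurable (w s) := fun s => (hadapted s).mono (hm s) le_rfl
  have hXm : ∀ s, Measurable fun ω => w s ω - wopt := fun s => (hwm s).sub measurable_const
  have hXint : ∀ s, Integrable (fun ω => ‖w s ω - wopt‖ ^ 2) μ := by
    intro s
    refine (integrable_const (R ^ 2)).mono' (((hXm s).norm.pow_const 2).aestronglyMeasurable)
      (ae_of_all μ fun ω => ?_)
    rw [Real.norm_eq_abs, abs_of_nonneg (sq_nonneg _)]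
    exact pow_le_pow_left₀ (norm_nonneg _) (hXbdd s ω) 2
  have hgint : ∀ s, Integrable (g s) μ := fun s => (hg2 s).integrable one_le_two
  have hgsqint : ∀ s, Integrable (fun ω => ‖g s ω‖ ^ 2) μ := fun s =>
    (memLp_two_iff_integrable_sq_norm (hg2 s).1).mp (hg2 s)
  have hgradint : ∀ s, Integrable (fun ω => gradient F (w s ω)) μ := fun s =>
    integrable_condExp.congr (hunbiased s)
  have hinner_int : ∀ (G : Ω → EuclideanSpace ℝ (Fin n)), Integrable G μ → ∀ s,
      Integrable (fun ω => ⟪G ω, w s ω - wopt⟫) μ := by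
    intro G hG s
    refine (hG.norm.const_mul R).mono'
      (AEStronglyMeasurable.inner hG.1 (hXm s).aestronglyMeasurable)
      (ae_of_all μ fun ω => ?_)
    rw [Real.norm_eq_abs]
    calc |⟪G ω, w s ω - wopt⟫| ≤ ‖G ω‖ * ‖w s ω - wopt‖ := abs_real_inner_le_norm _ _
      _ ≤ ‖G ω‖ * R := mul_le_mul_of_nonneg_left (hXbdd s ω) (norm_nonneg _)
      _ = R * ‖G ω‖ := mul_comm _ _
  have hprod_int : ∀ (G : Ω → EuclideanSpace ℝ (Fin n)), Integrable G μ → ∀ s (i : Fin n),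
      Integrable (fun ω => (w s ω i - wopt i) * G ω i) μ := by
    intro G hG s i
    refine (hG.norm.const_mul R).mono'
      (((((EuclideanSpace.proj i : EuclideanSpace ℝ (Fin n) →L[ℝ] ℝ)).continuous.measurable.comp (hwm s)).sub_const (wopt i)).aestronglyMeasurable.mul
        ((EuclideanSpace.proj i : EuclideanSpace ℝ (Fin n) →L[ℝ] ℝ).continuous.comp_aestronglyMeasurable hG.1))
      (ae_of_all μ fun ω => ?_)
    rw [Real.norm_eq_abs, abs_mul]
    have h1 : |w s ω i - wopt i| ≤ R := by
      calc |w s ω i - wopt i| = |(w s ω - wopt) i| := by simp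
        _ ≤ ‖w s ω - wopt‖ := coord_abs_le_norm _ i
        _ ≤ R := hXbdd s ω
    have h2 : |G ω i| ≤ ‖G ω‖ := coord_abs_le_norm _ i
    have hR : (0:ℝ) ≤ R := le_trans (abs_nonneg _) h1
    exact mul_le_mul h1 h2 (abs_nonneg _) hR
  -- the key conditional-expectation identity for the cross term
  have hkey : ∀ s, ∫ ω, ⟪g s ω, w s ω - wopt⟫ ∂μ
      = ∫ ω, ⟪gradient F (w s ω), w s ω - wopt⟫ ∂μ := by
    intro s
    have hexp : ∀ (G : Ω → EuclideanSpace ℝ (Fin n)), Integrable G μ →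
        ∫ ω, ⟪G ω, w s ω - wopt⟫ ∂μ = ∑ i : Fin n, ∫ ω, (w s ω i - wopt i) * G ω i ∂μ := by
      intro G hG
      rw [← integral_finset_sum _ (fun i _ => hprod_int G hG s i)]
      refine integral_congr_ae (ae_of_all μ fun ω => ?_)
      simp only [PiLp.inner_apply, RCLike.inner_apply, starRingEnd_apply, star_trivial]
      refine Finset.sum_congr rfl fun i _ => ?_
      simp [mul_comm]
    rw [hexp _ (hgint s), hexp _ (hgradint s)]
    refine Finset.sum_congr rfl fun i _ => ?_
    have hXi_sm : StronglyMeasurable[ℱ s] (fun ω => w s ω i - wopt i) :=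
      ((((EuclideanSpace.proj i : EuclideanSpace ℝ (Fin n) →L[ℝ] ℝ)).continuous.measurable.comp (hadapted s)).sub_const (wopt i)).stronglyMeasurable
    have hgi_int : Integrable (fun ω => g s ω i) μ :=
      (EuclideanSpace.proj i : EuclideanSpace ℝ (Fin n) →L[ℝ] ℝ).integrable_comp (hgint s)
    have hce := condExp_mul_of_stronglyMeasurable_left (μ := μ) hXi_sm
      (show Integrable ((fun ω => w s ω i - wopt i) * fun ω => g s ω i) μ from
        hprod_int _ (hgint s) s i)
      hgi_int
    have hci : μ[(fun ω => g s ω i)|ℱ s] =ᵐ[μ] fun ω => gradient F (w s ω) i := by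
      have h1 := condexp_comp_clm (hm s)
        (EuclideanSpace.proj i : EuclideanSpace ℝ (Fin n) →L[ℝ] ℝ) (hgint s)
      refine h1.trans ?_
      filter_upwards [hunbiased s] with ω hω
      simp [hω]
    calc ∫ ω, (w s ω i - wopt i) * g s ω i ∂μ
        = ∫ ω, (μ[(fun ω => w s ω i - wopt i) * fun ω => g s ω i|ℱ s]) ω ∂μ :=
          (integral_condExp (hm s)).symm
      _ = ∫ ω, (w s ω i - wopt i) * (μ[(fun ω => g s ω i)|ℱ s]) ω ∂μ :=
          integral_congr_ae (hce.mono fun ω hω => hω)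
      _ = ∫ ω, (w s ω i - wopt i) * gradient F (w s ω) i ∂μ := by
          refine integral_congr_ae ?_
          filter_upwards [hci] with ω hω
          rw [hω]
  -- lower bound for the cross term
  have hlb : ∀ s, c * ∫ ω, ‖w s ω - wopt‖ ^ 2 ∂μ ≤ ∫ ω, ⟪g s ω, w s ω - wopt⟫ ∂μ := by
    intro s
    rw [hkey s, ← integral_const_mul]
    refine integral_mono ((hXint s).const_mul c) (hinner_int _ (hgradint s) s) fun ω => ?_
    exact strong_min_inner hWconv hc hstrong hwoptW hwoptmin (hWmem s ω)
  -- one-step inequality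
  have hγpos : ∀ s : ℕ, 0 < γ s := by
    intro s; rw [hγ]; positivity
  have hstep : ∀ s : ℕ, ∫ ω, ‖w (s+1) ω - wopt‖ ^ 2 ∂μ
      ≤ (∫ ω, ‖w s ω - wopt‖ ^ 2 ∂μ) - 2 * γ s * (c * ∫ ω, ‖w s ω - wopt‖ ^ 2 ∂μ)
        + γ s ^ 2 * M ^ 2 := by
    intro s
    have hptw : ∀ ω, ‖w (s+1) ω - wopt‖ ^ 2
        ≤ ‖w s ω - wopt‖ ^ 2 - 2 * γ s * ⟪g s ω, w s ω - wopt⟫ + γ s ^ 2 * ‖g s ω‖ ^ 2 := by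
      intro ω
      have h1 : ‖w (s+1) ω - wopt‖ ≤ ‖(w s ω - γ s • g s ω) - wopt‖ := by
        rw [hrec]; exact proj_contract hWconv proj hproj _ hwoptW
      have h2 : ‖w (s+1) ω - wopt‖ ^ 2 ≤ ‖(w s ω - γ s • g s ω) - wopt‖ ^ 2 :=
        pow_le_pow_left₀ (norm_nonneg _) h1 2
      have h3 : (w s ω - γ s • g s ω) - wopt = (w s ω - wopt) - γ s • g s ω := by abel
      have hexp2 : ‖(w s ω - wopt) - γ s • g s ω‖ ^ 2
          = ‖w s ω - wopt‖ ^ 2 - 2 * γ s * ⟪g s ω, w s ω - wopt⟫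
            + γ s ^ 2 * ‖g s ω‖ ^ 2 := by
        rw [norm_sub_sq_real, real_inner_smul_right, norm_smul, Real.norm_eq_abs,
          abs_of_pos (hγpos s), real_inner_comm]
        ring
      rw [h3, hexp2] at h2
      exact h2
    have hint2 : Integrable (fun ω => ‖w s ω - wopt‖ ^ 2
        - 2 * γ s * ⟪g s ω, w s ω - wopt⟫ + γ s ^ 2 * ‖g s ω‖ ^ 2) μ :=
      ((hXint s).sub ((hinner_int _ (hgint s) s).const_mul (2 * γ s))).add
        ((hgsqint s).const_mul (γ s ^ 2))
    have h4 := integral_mono (hXint (s+1)) hint2 hptw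
    have hint_a : Integrable (fun ω => ‖w s ω - wopt‖ ^ 2
        - 2 * γ s * ⟪g s ω, w s ω - wopt⟫) μ :=
      (hXint s).sub ((hinner_int _ (hgint s) s).const_mul (2 * γ s))
    have hint_c : Integrable (fun ω => γ s ^ 2 * ‖g s ω‖ ^ 2) μ :=
      (hgsqint s).const_mul (γ s ^ 2)
    have hint_b : Integrable (fun ω => 2 * γ s * ⟪g s ω, w s ω - wopt⟫) μ :=
      (hinner_int _ (hgint s) s).const_mul (2 * γ s)
    rw [integral_add hint_a hint_c, integral_sub (hXint s) hint_b,
      integral_const_mul, integral_const_mul] at h4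
    have h5 : c * ∫ ω, ‖w s ω - wopt‖ ^ 2 ∂μ ≤ ∫ ω, ⟪g s ω, w s ω - wopt⟫ ∂μ := hlb s
    have h6 : ∫ ω, ‖g s ω‖ ^ 2 ∂μ ≤ M ^ 2 := hM s
    have hγs : 0 < γ s := hγpos s
    nlinarith [sq_nonneg (γ s)]
  -- arithmetic induction
  have hM2 : 0 ≤ M ^ 2 := le_trans (integral_nonneg fun ω => sq_nonneg _) (hM 0)
  have hAnonneg : ∀ s : ℕ, 0 ≤ ∫ ω, ‖w s ω - wopt‖ ^ 2 ∂μ :=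
    fun s => integral_nonneg fun ω => sq_nonneg _
  have hA0 : ∫ ω, ‖w 0 ω - wopt‖ ^ 2 ∂μ = ‖w0 - wopt‖ ^ 2 := by
    rw [hw0]; simp
  set K := max (M ^ 2 / c ^ 2) (‖w0 - wopt‖ ^ 2) with hK
  have hKM : M ^ 2 / c ^ 2 ≤ K := le_max_left _ _
  have hK0 : 0 ≤ K := le_trans (div_nonneg hM2 (sq_nonneg c)) hKM
  intro t
  induction t with
  | zero => intro h; omega
  | succ t ih =>
    intro _
    rcases Nat.eq_zero_or_pos t with rfl | htpos
    · -- base case t = 1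
      have h := hstep 0
      rw [hγ 0] at h
      have e1 : 2 * (1 / (c * ((0:ℕ) + 1))) * (c * ∫ ω, ‖w 0 ω - wopt‖ ^ 2 ∂μ)
          = 2 * ∫ ω, ‖w 0 ω - wopt‖ ^ 2 ∂μ := by
        push_cast; first
        | (field_simp; ring)
        | field_simp
      have e2 : (1 / (c * ((0:ℕ) + 1))) ^ 2 * M ^ 2 = M ^ 2 / c ^ 2 := by
        push_cast; first
        | (field_simp; ring)
        | field_simp
      rw [e1, e2] at h
      have : ∫ ω, ‖w 1 ω - wopt‖ ^ 2 ∂μ ≤ K := by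
        have := hAnonneg 0
        linarith
      simpa using this
    · have ih1 := ih htpos
      have h := hstep t
      rw [hγ t] at h
      have hT1 : (1:ℝ) ≤ (t:ℝ) := by exact_mod_cast htpos
      have hT0 : (0:ℝ) < (t:ℝ) := by linarith
      have hTp1 : (0:ℝ) < (t:ℝ) + 1 := by linarith
      set A0 : ℝ := ∫ ω, ‖w t ω - wopt‖ ^ 2 ∂μ with hA0'
      set A1 : ℝ := ∫ ω, ‖w (t+1) ω - wopt‖ ^ 2 ∂μ with hA1'
      clear_value A0 A1
      have hc' : c ≠ 0 := ne_of_gt hc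
      have hT' : ((t:ℝ) + 1) ≠ 0 := ne_of_gt hTp1
      have e1 : 2 * (1 / (c * ((t:ℝ) + 1))) * (c * A0) = 2 * A0 / ((t:ℝ) + 1) := by
        first
        | (field_simp; ring)
        | field_simp
      have e2 : (1 / (c * ((t:ℝ) + 1))) ^ 2 * M ^ 2 = (M ^ 2 / c ^ 2) / ((t:ℝ) + 1) ^ 2 := by
        field_simp
      rw [e1, e2] at h
      -- h : A1 ≤ A0 - 2 * A0 / (t+1) + (M^2/c^2)/(t+1)^2
      have hAt : A0 * (t:ℝ) ≤ K := by
        rw [← le_div_iff₀ hT0]; exact ih1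
      have hA0nn : 0 ≤ A0 := by rw [hA0']; exact hAnonneg t
      rw [show ((t+1 : ℕ) : ℝ) = (t:ℝ) + 1 by push_cast; ring, le_div_iff₀ hTp1]
      -- goal : A1 * (t+1) ≤ K
      have h7 : A1 * ((t:ℝ) + 1) ^ 2
          ≤ A0 * ((t:ℝ) + 1) ^ 2 - 2 * A0 * ((t:ℝ) + 1) + M ^ 2 / c ^ 2 := by
        have h8 := mul_le_mul_of_nonneg_right h (le_of_lt (pow_pos hTp1 2))
        calc A1 * ((t:ℝ) + 1) ^ 2
            ≤ (A0 - 2 * A0 / ((t:ℝ) + 1) + (M ^ 2 / c ^ 2) / ((t:ℝ) + 1) ^ 2)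
              * ((t:ℝ) + 1) ^ 2 := h8
          _ = A0 * ((t:ℝ) + 1) ^ 2 - 2 * A0 * ((t:ℝ) + 1) + M ^ 2 / c ^ 2 := by
            field_simp
      have hs1 : A1 * ((t:ℝ) + 1) ^ 2 ≤ K * ((t:ℝ) + 1) := by
        linarith [h7, mul_le_mul_of_nonneg_right hAt (le_of_lt hT0), hA0nn, hKM, hT1]
      have hs2 : A1 * ((t:ℝ) + 1) * ((t:ℝ) + 1) ≤ K * ((t:ℝ) + 1) := by linarith [hs1]
      exact le_of_mul_le_mul_right hs2 hTp1
end

section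
/- Equivalence of the rounding problem over the L¹ ball and over the full feasible set: let B ∈ ℤ_{≥0}, L ∈ ℤ_{≥1}, W = { w ∈ ℝⁿ : 0 ≤ wᵢ ≤ L for all i, and ∑ᵢ |wᵢ − 1| ≤ B }, and let w ∈ W. Let B₁(1, B) = { v ∈ ℝⁿ : ∑ᵢ |vᵢ − 1| ≤ B }. Then every minimizer w* of ‖w' − w‖₂² over w' ∈ ℤⁿ ∩ B₁(1, B) satisfies |w*ᵢ − 1| ≤ |wᵢ − 1| + 1/2 for all i, hence 0 ≤ w*ᵢ ≤ L; consequently the set of minimizers over ℤⁿ ∩ B₁(1, B) equals the set of minimizers over ℤⁿ ∩ W. -/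
/-!
If a closest integer point `v` of the `ℓ¹` ball around an integer centre `a` had a coordinate
with `v i > a i` and `v i > w i + 1/2`, lowering that coordinate by one would stay in the ball
and move closer to `w`; symmetrically from below. Hence every coordinate of `v` lies between
`min (a i) (w i - 1/2)` and `max (a i) (w i + 1/2)`, which gives the `1/2` bound and, by
integrality, `v ∈ [0, L]ⁿ`. Conversely, a closest integer point of `[0, L]ⁿ ∩ B₁(1, B)` is one of
the whole ball, because clamping to the box moves any point closer to both `1` and `w`.
-/

open Finset Function Set

variable {ι : Type*}

def IsIntegerPoint (v : ι → ℝ) : Prop := ∀ i, ∃ k : ℤ, v i = k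

lemma IsIntegerPoint.update [DecidableEq ι] {v : ι → ℝ} (hv : IsIntegerPoint v) (i : ι)
    {c : ℝ} (hc : ∃ k : ℤ, c = k) : IsIntegerPoint (update v i c) := by
  intro j
  rcases eq_or_ne j i with rfl | hj
  · simpa using hc
  · simpa [hj] using hv j

lemma Int.cast_add_one_le_of_cast_lt {m k : ℤ} (h : (m : ℝ) < k) : (m : ℝ) + 1 ≤ k := by
  exact_mod_cast Int.add_one_le_of_lt (by exact_mod_cast h)

variable [Fintype ι]

def l1Ball (a : ι → ℝ) (r : ℝ) : Set (ι → ℝ) := {v | ∑ i, |v i - a i| ≤ r}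

def IsClosestIntegerPoint (S : Set (ι → ℝ)) (w v : ι → ℝ) : Prop :=
  IsIntegerPoint v ∧ v ∈ S ∧
    ∀ u : ι → ℝ, IsIntegerPoint u → u ∈ S → ∑ i, (v i - w i) ^ 2 ≤ ∑ i, (u i - w i) ^ 2

lemma Finset.sum_apply_update_add {α M : Type*} [AddCommMonoid M] [DecidableEq ι]
    (g : ι → α → M) (v : ι → α) (i : ι) (c : α) :
    ∑ j, g j (update v i c j) + g i (v i) = ∑ j, g j (v j) + g i c := by
  simp_rw [apply_update g]
  rw [sum_update_of_mem (mem_univ i),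
    sum_eq_add_sum_sdiff_singleton_of_mem (mem_univ i) (fun j => g j (v j))]
  abel

namespace IsClosestIntegerPoint

variable {S T : Set (ι → ℝ)} {a w v : ι → ℝ} {r : ℝ}

lemma mono (hv : IsClosestIntegerPoint S w v) (hTS : T ⊆ S) (hvT : v ∈ T) :
    IsClosestIntegerPoint T w v :=
  ⟨hv.1, hvT, fun u hu huT => hv.2.2 u hu (hTS huT)⟩

/-- Replacing `v i` by `c` stays in the ball, so it cannot bring `v` closer to `w`. -/
lemma sq_sub_le_of_abs_sub_le (hv : IsClosestIntegerPoint (l1Ball a r) w v)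
    {i : ι} {c : ℝ} (hc : ∃ k : ℤ, c = k) (hca : |c - a i| ≤ |v i - a i|) :
    (v i - w i) ^ 2 ≤ (c - w i) ^ 2 := by
  classical
  obtain ⟨hvint, hvball, hvmin⟩ := hv
  have hball := sum_apply_update_add (fun j x => |x - a j|) v i c
  have hdist := sum_apply_update_add (fun j x => (x - w j) ^ 2) v i c
  have hupdate : update v i c ∈ l1Ball a r := by
    simp only [l1Ball, mem_ofPred_eq] at hvball ⊢
    linarith
  linarith [hvmin _ (hvint.update i hc) hupdate]

lemma le_max_add_half (ha : IsIntegerPoint a)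
    (hv : IsClosestIntegerPoint (l1Ball a r) w v) (i : ι) : v i ≤ max (a i) (w i + 1 / 2) := by
  by_contra! h
  obtain ⟨hav, hwv⟩ := max_lt_iff.mp h
  obtain ⟨k, hk⟩ := hv.1 i
  obtain ⟨m, hm⟩ := ha i
  have hstep : a i ≤ v i - 1 := by
    rw [hk, hm] at hav ⊢
    linarith [Int.cast_add_one_le_of_cast_lt hav]
  have := hv.sq_sub_le_of_abs_sub_le (c := v i - 1) ⟨k - 1, by push_cast; rw [hk]⟩
    (by rw [abs_of_nonneg (by linarith), abs_of_nonneg (by linarith)]; linarith)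
  nlinarith

lemma min_sub_half_le (ha : IsIntegerPoint a)
    (hv : IsClosestIntegerPoint (l1Ball a r) w v) (i : ι) : min (a i) (w i - 1 / 2) ≤ v i := by
  by_contra! h
  obtain ⟨hav, hwv⟩ := lt_min_iff.mp h
  obtain ⟨k, hk⟩ := hv.1 i
  obtain ⟨m, hm⟩ := ha i
  have hstep : v i + 1 ≤ a i := by
    rw [hk, hm] at hav ⊢
    exact Int.cast_add_one_le_of_cast_lt hav
  have := hv.sq_sub_le_of_abs_sub_le (c := v i + 1) ⟨k + 1, by push_cast; rw [hk]⟩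
    (by rw [abs_of_nonpos (by linarith), abs_of_nonpos (by linarith)]; linarith)
  nlinarith

lemma abs_sub_le_abs_sub_add_half (ha : IsIntegerPoint a)
    (hv : IsClosestIntegerPoint (l1Ball a r) w v) (i : ι) : |v i - a i| ≤ |w i - a i| + 1 / 2 := by
  have := le_abs_self (w i - a i)
  have := neg_abs_le (w i - a i)
  rcases le_max_iff.mp (hv.le_max_add_half ha i) with hup | hup <;>
    rcases min_le_iff.mp (hv.min_sub_half_le ha i) with hlow | hlow <;>
    exact abs_le.mpr ⟨by linarith, by linarith⟩

lemma mem_Icc {lo hi : ι → ℝ} (hlo : IsIntegerPoint lo) (hhi : IsIntegerPoint hi)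
    (ha : IsIntegerPoint a) (haI : a ∈ Icc lo hi) (hw : w ∈ Icc lo hi)
    (hv : IsClosestIntegerPoint (l1Ball a r) w v) : v ∈ Icc lo hi := by
  refine ⟨fun i => ?_, fun i => ?_⟩
  · obtain ⟨k, hk⟩ := hv.1 i
    obtain ⟨m, hm⟩ := hlo i
    have hlt : (m : ℝ) - 1 < k := by
      have := hv.min_sub_half_le ha i
      rcases min_le_iff.mp this with h | h <;> linarith [haI.1 i, hw.1 i]
    rw [hk, hm]
    simpa using Int.cast_add_one_le_of_cast_lt (m := m - 1) (by push_cast; exact hlt)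
  · obtain ⟨k, hk⟩ := hv.1 i
    obtain ⟨m, hm⟩ := hhi i
    have hlt : (k : ℝ) < m + 1 := by
      have := hv.le_max_add_half ha i
      rcases le_max_iff.mp this with h | h <;> linarith [haI.2 i, hw.2 i]
    rw [hk, hm]
    simpa using Int.cast_add_one_le_of_cast_lt (k := m + 1) (by push_cast; exact hlt)

/-- Clamping coordinatewise to the box `[lo, hi]` preserves integrality and moves a point closer
to every point of the box, in particular to `a` and to `w`. -/
lemma of_Icc_inter {lo hi : ι → ℝ} (hlo : IsIntegerPoint lo) (hhi : IsIntegerPoint hi)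
    (haI : a ∈ Icc lo hi) (hw : w ∈ Icc lo hi)
    (hv : IsClosestIntegerPoint (Icc lo hi ∩ l1Ball a r) w v) :
    IsClosestIntegerPoint (l1Ball a r) w v := by
  have hle : lo ≤ hi := haI.1.trans haI.2
  refine ⟨hv.1, hv.2.1.2, fun u hu hua => ?_⟩
  set u' : ι → ℝ := fun j => projIcc (lo j) (hi j) (hle j) (u j)
  have hclose : ∀ t ∈ Icc lo hi, ∀ j, |u' j - t j| ≤ |u j - t j| := fun t ht j => by
    simpa [projIcc_of_mem (hle j) (⟨ht.1 j, ht.2 j⟩ : t j ∈ Icc (lo j) (hi j))] using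
      abs_projIcc_sub_projIcc (hle j) (c := u j) (d := t j)
  have hu' : IsIntegerPoint u' := fun j => by
    obtain ⟨k, hk⟩ := hu j
    obtain ⟨l, hl⟩ := hlo j
    obtain ⟨m, hm⟩ := hhi j
    exact ⟨max l (min m k), by simp [u', coe_projIcc, hk, hl, hm]⟩
  have hu'mem : u' ∈ Icc lo hi ∩ l1Ball a r :=
    ⟨⟨fun j => (projIcc _ _ (hle j) _).2.1, fun j => (projIcc _ _ (hle j) _).2.2⟩,
      (sum_le_sum fun j _ => hclose a haI j).trans hua⟩
  calc ∑ j, (v j - w j) ^ 2 ≤ ∑ j, (u' j - w j) ^ 2 := hv.2.2 u' hu' hu'mem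
    _ ≤ ∑ j, (u j - w j) ^ 2 := sum_le_sum fun j _ => sq_le_sq.mpr (hclose w hw j)

end IsClosestIntegerPoint

lemma isClosestIntegerPoint_Icc_inter_l1Ball_iff {lo hi a w v : ι → ℝ} {r : ℝ}
    (hlo : IsIntegerPoint lo) (hhi : IsIntegerPoint hi) (ha : IsIntegerPoint a)
    (haI : a ∈ Icc lo hi) (hw : w ∈ Icc lo hi) :
    IsClosestIntegerPoint (Icc lo hi ∩ l1Ball a r) w v ↔ IsClosestIntegerPoint (l1Ball a r) w v :=
  ⟨IsClosestIntegerPoint.of_Icc_inter hlo hhi haI hw, fun hv =>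
    hv.mono inter_subset_right ⟨hv.mem_Icc hlo hhi ha haI hw, hv.2.1⟩⟩

theorem rounding_ball_equiv_general (n : ℕ) (B L : ℤ) (hL : 1 ≤ L)
    (W : Set (Fin n → ℝ))
    (hW : W = {v | (∀ i, 0 ≤ v i ∧ v i ≤ (L : ℝ)) ∧ ∑ i, |v i - 1| ≤ (B : ℝ)})
    (Ball : Set (Fin n → ℝ)) (hBall : Ball = {v | ∑ i, |v i - 1| ≤ (B : ℝ)})
    (w : Fin n → ℝ) (hw : w ∈ W) :
    (∀ wstar : Fin n → ℝ, (∀ i, ∃ k : ℤ, wstar i = (k : ℝ)) → wstar ∈ Ball →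
      (∀ w' : Fin n → ℝ, (∀ i, ∃ k : ℤ, w' i = (k : ℝ)) → w' ∈ Ball →
        ∑ i, (wstar i - w i) ^ 2 ≤ ∑ i, (w' i - w i) ^ 2) →
      (∀ i, |wstar i - 1| ≤ |w i - 1| + 1 / 2) ∧
        (∀ i, 0 ≤ wstar i ∧ wstar i ≤ (L : ℝ))) ∧
    {v | (∀ i, ∃ k : ℤ, v i = (k : ℝ)) ∧ v ∈ Ball ∧
        ∀ w' : Fin n → ℝ, (∀ i, ∃ k : ℤ, w' i = (k : ℝ)) → w' ∈ Ball →
          ∑ i, (v i - w i) ^ 2 ≤ ∑ i, (w' i - w i) ^ 2}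
      = {v | (∀ i, ∃ k : ℤ, v i = (k : ℝ)) ∧ v ∈ W ∧
          ∀ w' : Fin n → ℝ, (∀ i, ∃ k : ℤ, w' i = (k : ℝ)) → w' ∈ W →
            ∑ i, (v i - w i) ^ 2 ≤ ∑ i, (w' i - w i) ^ 2} := by
  subst hW hBall
  have hbox : {v : Fin n → ℝ | (∀ i, 0 ≤ v i ∧ v i ≤ (L : ℝ)) ∧ ∑ i, |v i - 1| ≤ (B : ℝ)} =
      Icc (fun _ => 0) (fun _ => (L : ℝ)) ∩ l1Ball 1 B := by
    ext v
    simp [l1Ball, Pi.le_def, forall_and]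
  rw [hbox] at hw ⊢
  have hL' : (1 : ℝ) ≤ L := by exact_mod_cast hL
  have hone : IsIntegerPoint (1 : Fin n → ℝ) := fun _ => ⟨1, by simp⟩
  have hiff := fun v => isClosestIntegerPoint_Icc_inter_l1Ball_iff (v := v) (r := B)
    (fun _ => ⟨0, by simp⟩) (fun _ => ⟨L, rfl⟩) hone ⟨fun _ => zero_le_one, fun _ => hL'⟩ hw.1
  refine ⟨fun v hvint hvball hvmin => ?_, ext fun v => (hiff v).symm⟩
  have hv : IsClosestIntegerPoint (l1Ball 1 B) w v := ⟨hvint, hvball, hvmin⟩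
  have hvI := ((hiff v).mpr hv).2.1.1
  exact ⟨hv.abs_sub_le_abs_sub_add_half hone, fun i => ⟨hvI.1 i, hvI.2 i⟩⟩

/-- equivalence of the rounding problem over the L¹ ball
`B₁(1, B)` and over the full feasible set `W`. For `w ∈ W`, every minimizer
`w*` of `‖w' − w‖₂²` over integer vectors of `B₁(1, B)` satisfies
`|w*ᵢ − 1| ≤ |wᵢ − 1| + 1/2`, hence `0 ≤ w*ᵢ ≤ L`; consequently the sets of
minimizers over integer vectors of `B₁(1, B)` and of `W` coincide. -/
theorem rounding_ball_equiv (n : ℕ) (B L : ℤ) (hB : 0 ≤ B) (hL : 1 ≤ L)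
    (W : Set (Fin n → ℝ))
    (hW : W = {v | (∀ i, 0 ≤ v i ∧ v i ≤ (L : ℝ)) ∧ ∑ i, |v i - 1| ≤ (B : ℝ)})
    (Ball : Set (Fin n → ℝ)) (hBall : Ball = {v | ∑ i, |v i - 1| ≤ (B : ℝ)})
    (w : Fin n → ℝ) (hw : w ∈ W) :
    (∀ wstar : Fin n → ℝ, (∀ i, ∃ k : ℤ, wstar i = (k : ℝ)) → wstar ∈ Ball →
      (∀ w' : Fin n → ℝ, (∀ i, ∃ k : ℤ, w' i = (k : ℝ)) → w' ∈ Ball →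
        ∑ i, (wstar i - w i) ^ 2 ≤ ∑ i, (w' i - w i) ^ 2) →
      (∀ i, |wstar i - 1| ≤ |w i - 1| + 1 / 2) ∧
        (∀ i, 0 ≤ wstar i ∧ wstar i ≤ (L : ℝ))) ∧
    {v | (∀ i, ∃ k : ℤ, v i = (k : ℝ)) ∧ v ∈ Ball ∧
        ∀ w' : Fin n → ℝ, (∀ i, ∃ k : ℤ, w' i = (k : ℝ)) → w' ∈ Ball →
          ∑ i, (v i - w i) ^ 2 ≤ ∑ i, (w' i - w i) ^ 2}
      = {v | (∀ i, ∃ k : ℤ, v i = (k : ℝ)) ∧ v ∈ W ∧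
          ∀ w' : Fin n → ℝ, (∀ i, ∃ k : ℤ, w' i = (k : ℝ)) → w' ∈ W →
            ∑ i, (v i - w i) ^ 2 ≤ ∑ i, (w' i - w i) ^ 2} :=
  rounding_ball_equiv_general n B L hL W hW Ball hBall w hw
end
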